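/- The constant J̃(α) = 1/(2α+1) − 2/(α+1) + 1 satisfies J̃(α)/J(α,0,b_FWD) → 1 as α ↓ −1/2, where J(α,0,b_FWD) = Σ_{k=1}^∞ ∫_{k−1}^k (y^α − k^α)² dy. Equivalently, J̃(α) equals the k = 1 term of J(α,0,b_FWD), and this term dominates the series as α ↓ −1/2 (both quantities tend to ∞ while the remaining terms of the series stay bounded). -/

import Mathlib

open Real Filter Set

/-- The truncation-error constant `J̃(α)`. -/
noncomputable def Jtilde (α : ℝ) : ℝ := 1 / (2 * α + 1) - 2 / (α + 1) + 1

/-- The asymptotic MSE constant of the forward Riemann-sum scheme,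
`J(α,0,b_FWD) = Σ_{k=1}^∞ ∫_{k-1}^k (y^α − k^α)² dy` (indexed here by `k = i+1`). -/
noncomputable def JFWD (α : ℝ) : ℝ :=
  ∑' i : ℕ, ∫ y in (i : ℝ)..((i : ℝ) + 1), (y ^ α - ((i : ℝ) + 1) ^ α) ^ 2

/-!
The first term of `J(α,0,b_FWD)` is computed exactly and equals `J̃(α)`, which blows up
like `1/(2α+1)`. For `α ≤ 0` and `k ≥ 2` the integrand of the `k`-th term lies in `[0, d_k]`
with `d_k = (k-1)^α - k^α ≤ 1`, so the term is at most `d_k² ≤ d_k`; these bounds telescope,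
and the tail of the series is at most `1`. Hence `J(α,0,b_FWD) = J̃(α) + O(1) ~ J̃(α)`.
-/

open Asymptotics intervalIntegral Topology

lemma integral_rpow_sub_one_sq {α : ℝ} (hα : -(1 / 2) < α) :
    ∫ y in (0 : ℝ)..1, (y ^ α - 1) ^ 2 = 1 / (2 * α + 1) - 2 / (α + 1) + 1 := by
  have hexpand : EqOn (fun y : ℝ => (y ^ α - 1) ^ 2)
      (fun y => y ^ (2 * α) - 2 * y ^ α + 1) (uIcc 0 1) := by
    intro y hy
    rw [uIcc_of_le zero_le_one] at hy
    dsimp only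
    rw [show 2 * α = α * (2 : ℕ) by push_cast; ring, rpow_mul_natCast hy.1]
    ring
  have h2α : -1 < 2 * α := by linarith
  have hα' : -1 < α := by linarith
  have hi2α := intervalIntegrable_rpow' (a := 0) (b := 1) h2α
  have hiα := (intervalIntegrable_rpow' (a := 0) (b := 1) hα').const_mul 2
  rw [integral_congr hexpand, integral_add (hi2α.sub hiα) intervalIntegrable_const,
    integral_sub hi2α hiα, integral_const_mul, integral_rpow (.inl h2α),
    integral_rpow (.inl hα'), zero_rpow (by linarith), zero_rpow (by linarith)]
  simp only [one_rpow, integral_const, smul_eq_mul]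
  ring

lemma integral_rpow_sub_rpow_sq_le {α a : ℝ} (hα : α ≤ 0) (ha : 1 ≤ a) :
    ∫ y in a..a + 1, (y ^ α - (a + 1) ^ α) ^ 2 ≤ a ^ α - (a + 1) ^ α := by
  set d := a ^ α - (a + 1) ^ α
  have ha0 : 0 < a := by linarith
  have hd0 : 0 ≤ d := sub_nonneg.2 (rpow_le_rpow_of_nonpos ha0 (by linarith) hα)
  have hd1 : d ≤ 1 := by
    have := rpow_le_one_of_one_le_of_nonpos ha hα
    have := rpow_nonneg (by linarith : (0 : ℝ) ≤ a + 1) α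
    linarith
  have hpoint : ∀ y ∈ Icc a (a + 1), (y ^ α - (a + 1) ^ α) ^ 2 ≤ d ^ 2 := fun y hy =>
    pow_le_pow_left₀ (sub_nonneg.2 (rpow_le_rpow_of_nonpos (by linarith [hy.1]) hy.2 hα))
      (sub_le_sub_right (rpow_le_rpow_of_nonpos ha0 hy.1 hα) _) 2
  have hcont : ContinuousOn (fun y : ℝ => (y ^ α - (a + 1) ^ α) ^ 2) (uIcc a (a + 1)) :=
    ((continuousOn_id.rpow_const fun y hy =>
      .inl (by rw [uIcc_of_le (by linarith)] at hy; exact (ha0.trans_le hy.1).ne')).sub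
      continuousOn_const).pow 2
  calc ∫ y in a..a + 1, (y ^ α - (a + 1) ^ α) ^ 2
      ≤ ∫ _ in a..a + 1, d ^ 2 :=
        integral_mono_on (by linarith) hcont.intervalIntegrable intervalIntegrable_const hpoint
    _ = d ^ 2 := by simp
    _ ≤ d := by nlinarith

lemma Filter.Tendsto.isEquivalent_add_of_isBigO_one {ι : Type*} {l : Filter ι} {f g : ι → ℝ}
    (hf : Tendsto f l atTop) (hg : g =O[l] (fun _ => (1 : ℝ))) : f + g ~[l] f :=
  IsEquivalent.refl.add_isLittleO
    (hg.trans_isLittleO ((isLittleO_one_left_iff ℝ).2 (tendsto_norm_atTop_atTop.comp hf)))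

lemma tendsto_Jtilde_atTop : Tendsto Jtilde (𝓝[>] (-(1 / 2))) atTop := by
  have hpole : Tendsto (fun α : ℝ => 2 * α + 1) (𝓝[>] (-(1 / 2))) (𝓝[>] 0) := by
    refine tendsto_nhdsWithin_of_tendsto_nhds_of_eventually_within _ ?_ ?_
    · have : Tendsto (fun α : ℝ => 2 * α + 1) (𝓝 (-(1 / 2))) (𝓝 (2 * (-(1 / 2)) + 1)) :=
        (tendsto_id.const_mul 2).add_const 1
      rw [show (2 : ℝ) * (-(1 / 2)) + 1 = 0 by norm_num] at this
      exact this.mono_left nhdsWithin_le_nhds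
    · filter_upwards [self_mem_nhdsWithin] with α (hα : -(1 / 2) < α)
      show 0 < 2 * α + 1
      linarith
  have hrest : Tendsto (fun α : ℝ => 1 - 2 / (α + 1)) (𝓝[>] (-(1 / 2)))
      (𝓝 (1 - 2 / (-(1 / 2) + 1))) :=
    .mono_left (tendsto_const_nhds.sub <|
      tendsto_const_nhds.div (tendsto_id.add_const 1) (by norm_num)) nhdsWithin_le_nhds
  refine (hpole.inv_tendsto_nhdsGT_zero.atTop_add hrest).congr fun α => ?_
  simp only [Jtilde, Pi.inv_apply, one_div]
  ring

noncomputable def fwdTerm (α : ℝ) (i : ℕ) : ℝ :=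
  ∫ y in (i : ℝ)..((i : ℝ) + 1), (y ^ α - ((i : ℝ) + 1) ^ α) ^ 2

lemma JFWD_eq_tsum_fwdTerm (α : ℝ) : JFWD α = ∑' i, fwdTerm α i := rfl

lemma fwdTerm_nonneg (α : ℝ) (i : ℕ) : 0 ≤ fwdTerm α i :=
  integral_nonneg (by linarith) fun _ _ => sq_nonneg _

lemma fwdTerm_zero {α : ℝ} (hα : -(1 / 2) < α) : fwdTerm α 0 = Jtilde α := by
  simp [fwdTerm, Jtilde, integral_rpow_sub_one_sq hα]

lemma fwdTerm_succ (α : ℝ) (i : ℕ) :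
    fwdTerm α (i + 1) =
      ∫ y in ((i : ℝ) + 1)..((i : ℝ) + 2), (y ^ α - ((i : ℝ) + 2) ^ α) ^ 2 := by
  rw [fwdTerm, Nat.cast_succ, add_assoc, one_add_one_eq_two]

lemma fwdTerm_le {α : ℝ} (hα : α ≤ 0) {i : ℕ} (hi : 1 ≤ i) :
    fwdTerm α i ≤ (i : ℝ) ^ α - ((i : ℝ) + 1) ^ α :=
  integral_rpow_sub_rpow_sq_le hα (by exact_mod_cast hi)

lemma sum_range_fwdTerm_succ_le {α : ℝ} (hα : α ≤ 0) (n : ℕ) :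
    ∑ i ∈ Finset.range n, fwdTerm α (i + 1) ≤ 1 := by
  calc ∑ i ∈ Finset.range n, fwdTerm α (i + 1)
      ≤ ∑ i ∈ Finset.range n, (((i + 1 : ℕ) : ℝ) ^ α - ((i + 1 + 1 : ℕ) : ℝ) ^ α) :=
        Finset.sum_le_sum fun i _ => by
          simpa only [Nat.cast_succ] using fwdTerm_le hα (Nat.le_add_left 1 i)
    _ = 1 - ((n + 1 : ℕ) : ℝ) ^ α := by
        rw [Finset.sum_range_sub' (fun i : ℕ => ((i + 1 : ℕ) : ℝ) ^ α), zero_add, Nat.cast_one,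
          one_rpow]
    _ ≤ 1 := sub_le_self _ (rpow_nonneg (Nat.cast_nonneg _) α)

lemma summable_fwdTerm {α : ℝ} (hα : α ≤ 0) : Summable (fwdTerm α) :=
  (summable_nat_add_iff 1).1 <|
    summable_of_sum_range_le (fun i => fwdTerm_nonneg α (i + 1)) (sum_range_fwdTerm_succ_le hα)

lemma tsum_fwdTerm_succ_le {α : ℝ} (hα : α ≤ 0) : ∑' i, fwdTerm α (i + 1) ≤ 1 :=
  Real.tsum_le_of_sum_range_le (fun i => fwdTerm_nonneg α (i + 1)) (sum_range_fwdTerm_succ_le hα)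

lemma JFWD_eq_Jtilde_add_tsum {α : ℝ} (h₁ : -(1 / 2) < α) (h₂ : α ≤ 0) :
    JFWD α = Jtilde α + ∑' i, fwdTerm α (i + 1) := by
  rw [JFWD_eq_tsum_fwdTerm, (summable_fwdTerm h₂).tsum_eq_zero_add, fwdTerm_zero h₁]

theorem Jtilde_dominates_JFWD :
    (∀ α ∈ Set.Ioo (-(1/2) : ℝ) 0,
      Jtilde α = ∫ y in (0 : ℝ)..1, (y ^ α - 1) ^ 2) ∧
    Tendsto (fun α => Jtilde α / JFWD α) (nhdsWithin (-(1/2) : ℝ) (Set.Ioi (-(1/2)))) (nhds 1) ∧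
    Tendsto Jtilde (nhdsWithin (-(1/2) : ℝ) (Set.Ioi (-(1/2)))) atTop ∧
    Tendsto JFWD (nhdsWithin (-(1/2) : ℝ) (Set.Ioi (-(1/2)))) atTop ∧
    (∃ C : ℝ, ∀ α ∈ Set.Ioo (-(1/2) : ℝ) 0,
      (∑' i : ℕ, ∫ y in ((i : ℝ) + 1)..((i : ℝ) + 2), (y ^ α - ((i : ℝ) + 2) ^ α) ^ 2) ≤ C) := by
  simp only [← fwdTerm_succ]
  set tail := fun α => ∑' i, fwdTerm α (i + 1)
  have hIoo : Ioo (-(1 / 2) : ℝ) 0 ∈ 𝓝[>] (-(1 / 2) : ℝ) := Ioo_mem_nhdsGT (by norm_num)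
  have hsplit : JFWD =ᶠ[𝓝[>] (-(1 / 2))] Jtilde + tail :=
    eventually_of_mem hIoo fun α hα => JFWD_eq_Jtilde_add_tsum hα.1 hα.2.le
  have htail : tail =O[𝓝[>] (-(1 / 2))] (fun _ => (1 : ℝ)) :=
    .of_bound' <| eventually_of_mem hIoo fun α hα => by
      rw [norm_one, Real.norm_of_nonneg (tsum_nonneg fun i => fwdTerm_nonneg α (i + 1))]
      exact tsum_fwdTerm_succ_le hα.2.le
  have hequiv : JFWD ~[𝓝[>] (-(1 / 2))] Jtilde :=
    (tendsto_Jtilde_atTop.isEquivalent_add_of_isBigO_one htail).congr_left hsplit.symm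
  have hJFWD := hequiv.symm.tendsto_atTop tendsto_Jtilde_atTop
  refine ⟨fun α hα => (integral_rpow_sub_one_sq hα.1).symm, ?_, tendsto_Jtilde_atTop, hJFWD,
    1, fun α hα => tsum_fwdTerm_succ_le hα.2.le⟩
  exact (isEquivalent_iff_tendsto_one
    ((hJFWD.eventually_gt_atTop 0).mono fun _ h => h.ne')).1 hequiv.symm
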